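/- arXiv:1307.7232 — 2 statements merged into one kernel-verified Lean document; each statement's English description precedes it below -/
import Mathlib

section
/- Let a₁, …, a_n be pseudo Drazin invertible elements of a Banach algebra A with a_i a_j = 0 for all i ≠ j. Then a₁ + ⋯ + a_n is pseudo Drazin invertible and (a₁ + ⋯ + a_n)^‡ = a₁^‡ + ⋯ + a_n^‡. -/
/-- Membership in the Jacobson radical of a ring. -/
def MemJacobson {A : Type*} [Ring A] (x : A) : Prop := ∀ y : A, IsUnit (1 - y * x)

/-- `b` is a pseudo Drazin inverse of `a`. -/
def IsPDrazinInv {A : Type*} [Ring A] (a b : A) : Prop :=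
  a * b = b * a ∧ b * a * b = b ∧ ∃ k : ℕ, 1 ≤ k ∧ MemJacobson (a ^ k - a ^ (k + 1) * b)

section Aux

variable {A : Type*} [Ring A]

lemma memJacobson_zero : MemJacobson (0 : A) := fun y => by simp

lemma memJacobson_add {x x' : A} (h : MemJacobson x) (h' : MemJacobson x') :
    MemJacobson (x + x') := by
  intro y
  obtain ⟨u, hu⟩ := h y
  have h2 := h' (↑u⁻¹ * y)
  have key : (u : A) * (1 - ↑u⁻¹ * y * x') = (1 : A) - y * (x + x') := by
    have h1 : (u : A) * (↑u⁻¹ * y * x') = y * x' := by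
      rw [← mul_assoc, ← mul_assoc, u.mul_inv, one_mul]
    rw [mul_sub, mul_one, h1, hu, mul_add, sub_sub]
  rw [← key]
  exact (Units.isUnit u).mul h2

lemma memJacobson_mul_left (z : A) {x : A} (h : MemJacobson x) :
    MemJacobson (z * x) := by
  intro y
  rw [← mul_assoc]
  exact h (y * z)

lemma memJacobson_sum {ι : Type*} {s : Finset ι} {f : ι → A}
    (h : ∀ i ∈ s, MemJacobson (f i)) : MemJacobson (∑ i ∈ s, f i) :=
  Finset.sum_induction f _ (fun _ _ ha hb => memJacobson_add ha hb) memJacobson_zero h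

lemma diag_mul {n : ℕ} (f g : Fin n → A) (h : ∀ i j, i ≠ j → f i * g j = 0) :
    (∑ i, f i) * (∑ i, g i) = ∑ i, f i * g i := by
  rw [Finset.sum_mul]
  refine Finset.sum_congr rfl (fun i _ => ?_)
  rw [Finset.mul_sum]
  exact Finset.sum_eq_single_of_mem i (Finset.mem_univ i)
    (fun j _ hj => h i j (Ne.symm hj))

end Aux

theorem stmt6 {A : Type*} [NormedRing A] [NormedAlgebra ℂ A] [CompleteSpace A]
    (n : ℕ) (a ad : Fin n → A) (h : ∀ i, IsPDrazinInv (a i) (ad i))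
    (horth : ∀ i j, i ≠ j → a i * a j = 0) :
    IsPDrazinInv (∑ i, a i) (∑ i, ad i) := by
  have hc : ∀ i, a i * ad i = ad i * a i := fun i => (h i).1
  have hbab : ∀ i, ad i * a i * ad i = ad i := fun i => (h i).2.1
  -- b = a * b * b  and  b = b * b * a
  have hb1 : ∀ i, ad i = a i * ad i * ad i := by
    intro i
    conv_lhs => rw [← hbab i]
    rw [← hc i]
  have hb2 : ∀ i, ad i = ad i * ad i * a i := by
    intro i
    conv_lhs => rw [← hbab i]
    rw [mul_assoc, mul_assoc, ← hc i, ← mul_assoc]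
  -- cross products vanish
  have had_r : ∀ i j, i ≠ j → a i * ad j = 0 := by
    intro i j hij
    rw [hb1 j, ← mul_assoc, ← mul_assoc, horth i j hij, zero_mul, zero_mul]
  have had_l : ∀ i j, i ≠ j → ad i * a j = 0 := by
    intro i j hij
    rw [hb2 i, mul_assoc, horth i j hij, mul_zero]
  have had_ad : ∀ i j, i ≠ j → ad i * ad j = 0 := by
    intro i j hij
    rw [hb1 j, ← mul_assoc, ← mul_assoc, had_l i j hij, zero_mul, zero_mul]
  -- powers of the sum
  have hpow : ∀ k : ℕ, 1 ≤ k → (∑ i, a i) ^ k = ∑ i, (a i) ^ k := by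
    intro k hk
    induction k with
    | zero => omega
    | succ m ih =>
      rcases Nat.eq_or_lt_of_le hk with h1 | h1
      · simp [← h1]
      · have hm : 1 ≤ m := by omega
        rw [pow_succ, ih hm, diag_mul _ _ (fun i j hij => ?_)]
        · exact Finset.sum_congr rfl fun i _ => (pow_succ (a i) m).symm
        · obtain ⟨m', rfl⟩ : ∃ m', m = m' + 1 := ⟨m - 1, by omega⟩
          rw [pow_succ, mul_assoc, horth i j hij, mul_zero]
  refine ⟨?_, ?_, ?_⟩
  · rw [diag_mul _ _ had_r, diag_mul _ _ had_l]
    exact Finset.sum_congr rfl fun i _ => hc i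
  · rw [diag_mul _ _ had_l, diag_mul _ _ (fun i j hij => ?_)]
    · exact Finset.sum_congr rfl fun i _ => hbab i
    · rw [mul_assoc, had_r i j hij, mul_zero]
  · obtain ⟨k, hk1, hk2⟩ : ∃ k : Fin n → ℕ, (∀ i, 1 ≤ k i) ∧
        (∀ i, MemJacobson ((a i) ^ (k i) - (a i) ^ (k i + 1) * ad i)) := by
      choose k h1 h2 using fun i => (h i).2.2
      exact ⟨k, h1, h2⟩
    set K : ℕ := (∑ i, k i) + 1 with hK
    have hKk : ∀ i, k i ≤ K := by
      intro i
      have := Finset.single_le_sum (f := k) (fun j _ => Nat.zero_le _) (Finset.mem_univ i)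
      omega
    refine ⟨K, by omega, ?_⟩
    have hpK : (∑ i, a i) ^ K = ∑ i, (a i) ^ K := hpow K (by omega)
    have hpK1 : (∑ i, a i) ^ (K + 1) = ∑ i, (a i) ^ (K + 1) := hpow (K + 1) (by omega)
    have hmul : (∑ i, (a i) ^ (K + 1)) * (∑ i, ad i) = ∑ i, (a i) ^ (K + 1) * ad i := by
      refine diag_mul _ _ (fun i j hij => ?_)
      rw [pow_succ, mul_assoc, had_r i j hij, mul_zero]
    rw [hpK, hpK1, hmul, ← Finset.sum_sub_distrib]
    refine memJacobson_sum (fun i _ => ?_)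
    have heq : (a i) ^ K - (a i) ^ (K + 1) * ad i =
        (a i) ^ (K - k i) * ((a i) ^ (k i) - (a i) ^ (k i + 1) * ad i) := by
      rw [mul_sub, ← pow_add, ← mul_assoc, ← pow_add,
        Nat.sub_add_cancel (hKk i)]
      congr 2
      have := hKk i
      congr 1
      omega
    rw [heq]
    exact memJacobson_mul_left _ (hk2 i)
end

section
/- Let a, b be pseudo Drazin invertible elements of a Banach algebra A with ab = λ ba, λ ≠ 0. Then a^‡ b = λ^(−1) b a^‡ and a b^‡ = λ^(−1) b^‡ a. -/
/-!
The element `p = a * ad` is an idempotent commuting with `a`, and `n = a * (1 - p)` satisfies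
`n ^ k ∈ J(A)`, so `n` is quasinilpotent. If `a * b = λ • (b * a)`, the corner
`x = (1 - p) * b * p` satisfies `x = n * x * (λ⁻¹ • ad)`, hence `x = n ^ m * x * (λ⁻¹ • ad) ^ m`
for all `m`, and Gelfand's formula forces `x = 0`; symmetrically `p * b * (1 - p) = 0`.
Thus `p` commutes with `b`, and `ad * b = λ⁻¹ • (b * ad)` follows by a direct computation.
The second identity is the first one for `b`, since `b * a = λ⁻¹ • (a * b)`.
-/

open Filter Topology

theorem MemJacobson.spectrum_subset_zero {𝕜 A : Type*} [Field 𝕜] [Ring A] [Algebra 𝕜 A]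
    {x : A} (hx : MemJacobson x) : spectrum 𝕜 x ⊆ {0} := by
  intro z hz
  by_contra hz0
  refine spectrum.mem_iff.mp hz ?_
  convert ((Ne.isUnit hz0).map (algebraMap 𝕜 A)).mul (hx (algebraMap 𝕜 A z⁻¹)) using 1
  rw [mul_sub, mul_one, ← mul_assoc, ← map_mul, mul_inv_cancel₀ hz0, map_one, one_mul]

theorem spectralRadius_eq_zero_of_memJacobson_pow {𝕜 A : Type*} [NormedField 𝕜] [Ring A]
    [Algebra 𝕜 A] {n : A} {k : ℕ} (h : MemJacobson (n ^ k)) : spectralRadius 𝕜 n = 0 := by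
  refine le_antisymm (iSup₂_le fun z hz => ?_) zero_le
  have hzk : z ^ k = 0 := h.spectrum_subset_zero (spectrum.pow_mem_pow n k hz)
  simp [eq_zero_of_pow_eq_zero hzk]

theorem eq_pow_mul_mul_pow_of_eq_mul_mul {M : Type*} [Monoid M] {n x v : M}
    (hx : x = n * x * v) (m : ℕ) : x = n ^ m * x * v ^ m := by
  induction m with
  | zero => simp
  | succ m ih =>
    calc x = n ^ m * (n * x * v) * v ^ m := by rwa [← hx]
      _ = n ^ (m + 1) * x * v ^ (m + 1) := by rw [pow_succ, pow_succ']; simp only [mul_assoc]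

section BanachAlgebra

variable {A : Type*} [NormedRing A] [NormedAlgebra ℂ A] [CompleteSpace A]

theorem eventually_norm_pow_mul_pow_lt_one {n : A} (hn : spectralRadius ℂ n = 0) {C : ℝ}
    (hC : 0 ≤ C) : ∀ᶠ m : ℕ in atTop, ‖n ^ m‖ * C ^ m < 1 := by
  have hroot : Tendsto (fun m : ℕ => ‖n ^ m‖ ^ (1 / m : ℝ) * C) atTop (𝓝 0) := by
    have h := (ENNReal.tendsto_toReal ENNReal.zero_ne_top).comp
      (hn ▸ spectrum.pow_norm_pow_one_div_tendsto_nhds_spectralRadius n)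
    simpa [Function.comp_def, ENNReal.toReal_ofReal, Real.rpow_nonneg] using h.mul_const C
  filter_upwards [hroot.eventually (gt_mem_nhds one_pos), eventually_ne_atTop 0] with m hm hm0
  calc ‖n ^ m‖ * C ^ m = (‖n ^ m‖ ^ (1 / m : ℝ) * C) ^ m := by
        rw [mul_pow, one_div, Real.rpow_inv_natCast_pow (norm_nonneg _) hm0]
    _ < 1 := pow_lt_one₀ (by positivity) hm hm0

theorem eq_zero_of_eventually_norm_le {n x : A} (hn : spectralRadius ℂ n = 0) {C : ℝ}
    (hC : 0 ≤ C) (hx : ∀ᶠ m : ℕ in atTop, ‖x‖ ≤ ‖n ^ m‖ * C ^ m * ‖x‖) : x = 0 := by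
  obtain ⟨m, hle, hlt⟩ := (hx.and (eventually_norm_pow_mul_pow_lt_one hn hC)).exists
  exact norm_le_zero_iff.mp (by nlinarith [norm_nonneg x])

theorem eq_zero_of_eq_mul_mul {n x v : A} (hn : spectralRadius ℂ n = 0) (hx : x = n * x * v) :
    x = 0 := by
  refine eq_zero_of_eventually_norm_le hn (norm_nonneg v) ?_
  filter_upwards [eventually_gt_atTop 0] with m hm
  calc ‖x‖ = ‖n ^ m * x * v ^ m‖ := by rw [← eq_pow_mul_mul_pow_of_eq_mul_mul hx m]
    _ ≤ ‖n ^ m‖ * ‖x‖ * ‖v ^ m‖ := norm_mul₃_le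
    _ ≤ ‖n ^ m‖ * ‖x‖ * ‖v‖ ^ m := by gcongr; exact norm_pow_le' v hm
    _ = ‖n ^ m‖ * ‖v‖ ^ m * ‖x‖ := by ring

theorem eq_zero_of_eq_mul_mul' {n x v : A} (hn : spectralRadius ℂ n = 0) (hx : x = v * x * n) :
    x = 0 := by
  refine eq_zero_of_eventually_norm_le hn (norm_nonneg v) ?_
  filter_upwards [eventually_gt_atTop 0] with m hm
  calc ‖x‖ = ‖v ^ m * x * n ^ m‖ := by rw [← eq_pow_mul_mul_pow_of_eq_mul_mul hx m]
    _ ≤ ‖v ^ m‖ * ‖x‖ * ‖n ^ m‖ := norm_mul₃_le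
    _ ≤ ‖v‖ ^ m * ‖x‖ * ‖n ^ m‖ := by gcongr; exact norm_pow_le' v hm
    _ = ‖n ^ m‖ * ‖v‖ ^ m * ‖x‖ := by ring

end BanachAlgebra

namespace IsPDrazinInv

section Ring

variable {A : Type*} [Ring A] {a ad : A}

theorem isIdempotentElem_mul (h : IsPDrazinInv a ad) : IsIdempotentElem (a * ad) := by
  show a * ad * (a * ad) = a * ad
  rw [mul_assoc, ← mul_assoc ad, h.2.1]

theorem commute_mul (h : IsPDrazinInv a ad) : Commute a (a * ad) := by
  show a * (a * ad) = a * ad * a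
  rw [mul_assoc a ad, ← h.1]

theorem mul_inv_mul_inv (h : IsPDrazinInv a ad) : a * ad * ad = ad := by
  rw [h.1, h.2.1]

theorem inv_mul_mul_inv (h : IsPDrazinInv a ad) : ad * (a * ad) = ad := by
  rw [← mul_assoc, h.2.1]

theorem spectralRadius_mul_one_sub_eq_zero {𝕜 : Type*} [NormedField 𝕜] [Algebra 𝕜 A]
    (h : IsPDrazinInv a ad) : spectralRadius 𝕜 (a * (1 - a * ad)) = 0 := by
  obtain ⟨-, -, k, hk, hJ⟩ := id h
  obtain ⟨j, rfl⟩ := Nat.exists_eq_add_of_le' hk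
  refine spectralRadius_eq_zero_of_memJacobson_pow (k := j + 1) ?_
  rwa [((Commute.one_right a).sub_right h.commute_mul).mul_pow,
    h.isIdempotentElem_mul.one_sub.pow_succ_eq, mul_sub, mul_one, ← mul_assoc, ← pow_succ]

end Ring

section BanachAlgebra

variable {A : Type*} [NormedRing A] [NormedAlgebra ℂ A] [CompleteSpace A] {a ad : A}

theorem one_sub_mul_mul_eq_zero (h : IsPDrazinInv a ad) {b : A} {μ : ℂ}
    (hb : b * a = μ • (a * b)) : (1 - a * ad) * b * (a * ad) = 0 := by
  have hq := h.isIdempotentElem_mul.one_sub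
  have haq : Commute a (1 - a * ad) := (Commute.one_right a).sub_right h.commute_mul
  have hpad := h.mul_inv_mul_inv
  generalize hp : a * ad = p at hq haq hpad ⊢
  refine eq_zero_of_eq_mul_mul h.spectralRadius_mul_one_sub_eq_zero (v := μ • ad) ?_
  rw [hp]
  symm
  calc a * (1 - p) * ((1 - p) * b * p) * (μ • ad)
      = (1 - p) * (μ • (a * b)) * (p * ad) := by
        simp only [mul_assoc, mul_smul_comm, smul_mul_assoc]
        rw [← mul_assoc (1 - p) (1 - p), hq.eq, ← mul_assoc a, haq.eq, mul_assoc]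
    _ = (1 - p) * b * p := by rw [← hb, hpad, ← hp]; simp only [mul_assoc]

theorem mul_mul_one_sub_eq_zero (h : IsPDrazinInv a ad) {b : A} {μ : ℂ}
    (hb : a * b = μ • (b * a)) : a * ad * b * (1 - a * ad) = 0 := by
  have hq := h.isIdempotentElem_mul.one_sub
  have haq : Commute a (1 - a * ad) := (Commute.one_right a).sub_right h.commute_mul
  have hadp := h.inv_mul_mul_inv
  have hadap : ad * a = a * ad := h.1.symm
  generalize hp : a * ad = p at hq haq hadp hadap ⊢
  refine eq_zero_of_eq_mul_mul' h.spectralRadius_mul_one_sub_eq_zero (v := μ • ad) ?_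
  rw [hp]
  symm
  calc μ • ad * (p * b * (1 - p)) * (a * (1 - p))
      = (ad * p) * (μ • (b * a)) * (1 - p) := by
        simp only [mul_assoc, mul_smul_comm, smul_mul_assoc]
        rw [← mul_assoc (1 - p) a, ← haq.eq, mul_assoc a, hq.eq]
    _ = p * b * (1 - p) := by
        rw [← hb, hadp, ← mul_assoc ad, hadap]

theorem commute_mul_of_mul_eq_smul_mul (h : IsPDrazinInv a ad) {b : A} {lam : ℂ}
    (hlam : lam ≠ 0) (hab : a * b = lam • (b * a)) : Commute (a * ad) b := by
  have hleft := h.one_sub_mul_mul_eq_zero ((eq_inv_smul_iff₀ hlam).2 hab.symm)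
  have hright := h.mul_mul_one_sub_eq_zero hab
  rw [sub_mul, sub_mul, one_mul, sub_eq_zero] at hleft
  rw [mul_sub, mul_one, sub_eq_zero] at hright
  exact hright.trans hleft.symm

theorem mul_eq_inv_smul_mul (h : IsPDrazinInv a ad) {b : A} {lam : ℂ} (hlam : lam ≠ 0)
    (hab : a * b = lam • (b * a)) : ad * b = lam⁻¹ • (b * ad) := by
  have hpb := h.commute_mul_of_mul_eq_smul_mul hlam hab
  calc ad * b = ad * (a * ad * b) := by rw [← mul_assoc, h.inv_mul_mul_inv]
    _ = ad * (b * a) * ad := by rw [hpb.eq]; simp only [mul_assoc]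
    _ = lam⁻¹ • (a * ad * b * ad) := by
        rw [(eq_inv_smul_iff₀ hlam).2 hab.symm, mul_smul_comm, smul_mul_assoc, h.1]
        simp only [mul_assoc]
    _ = lam⁻¹ • (b * ad) := by rw [hpb.eq, mul_assoc, h.mul_inv_mul_inv]

end BanachAlgebra

end IsPDrazinInv

theorem stmt13 {A : Type*} [NormedRing A] [NormedAlgebra ℂ A] [CompleteSpace A]
    (a ad b bd : A) (ha : IsPDrazinInv a ad) (hb : IsPDrazinInv b bd)
    (lam : ℂ) (hlam : lam ≠ 0) (h : a * b = lam • (b * a)) :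
    ad * b = lam⁻¹ • (b * ad) ∧ a * bd = lam⁻¹ • (bd * a) := by
  have hba : b * a = lam⁻¹ • (a * b) := (eq_inv_smul_iff₀ hlam).2 h.symm
  have hbd : bd * a = lam • (a * bd) := by
    simpa only [inv_inv] using hb.mul_eq_inv_smul_mul (inv_ne_zero hlam) hba
  exact ⟨ha.mul_eq_inv_smul_mul hlam h, (eq_inv_smul_iff₀ hlam).2 hbd.symm⟩
end
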